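/- arXiv:1102.0195 — 3 statements merged into one kernel-verified Lean document; each statement's English description precedes it below -/
import Mathlib

section
/- Let r : ℝ → ℂ be a Schwartz function and X, Y > 0. Suppose for every nonnegative integer j there is a constant C_j ≥ 0 with |r^{(j)}(x)| ≤ C_j Y^{-j} (1 + |x|/X)^{-2} for all x. Then for every nonnegative integer j, the Fourier transform satisfies |r̂(y)| ≪_j X (1 + |y| Y)^{-j} for all real y. -/
/-!
Bound `r̂(y)` in two ways by the trivial estimate `‖r̂‖∞ ≤ ‖r‖₁`: directly, giving `‖r̂(y)‖ ≪ X`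
since the weight `(1 + |x|/X)⁻²` has integral `2X`; and through `(r^{(j)})^(y) = (2πiy)^j r̂(y)`,
giving `|y|^j ‖r̂(y)‖ ≪ X Y^{-j}`. Adding the two and using `(1 + t)^j ≤ 2^j (1 + t^j)` gives the
claim.
-/

open MeasureTheory Real Filter FourierTransform
open scoped SchwartzMap

theorem Real.norm_fourier_le_integral_of_norm_le {V E : Type*} [NormedAddCommGroup V]
    [InnerProductSpace ℝ V] [MeasurableSpace V] [BorelSpace V] [FiniteDimensional ℝ V]
    [NormedAddCommGroup E] [NormedSpace ℂ E] {f : V → E} {B : V → ℝ} (hB : Integrable B)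
    (hfB : ∀ v, ‖f v‖ ≤ B v) (w : V) : ‖𝓕 f w‖ ≤ ∫ v, B v :=
  (VectorFourier.norm_fourierIntegral_le_integral_norm _ _ _ _ _).trans <|
    integral_mono_of_nonneg (.of_forall fun _ ↦ norm_nonneg _) hB (.of_forall hfB)

theorem integrable_inv_one_add_abs_sq : Integrable fun x : ℝ ↦ ((1 + |x|) ^ 2)⁻¹ := by
  refine integrable_inv_one_add_sq.mono' (by fun_prop) (.of_forall fun x ↦ ?_)
  rw [norm_of_nonneg (by positivity)]
  gcongr
  nlinarith [abs_nonneg x, sq_abs x]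

theorem integral_inv_one_add_abs_sq : ∫ x : ℝ, ((1 + |x|) ^ 2)⁻¹ = 2 := by
  have hIoi : ∫ x in Set.Ioi (0 : ℝ), ((1 + x) ^ 2)⁻¹ = 1 := by
    have hlim : Tendsto (fun x : ℝ ↦ -(1 + x)⁻¹) atTop (nhds 0) := by
      simpa using (tendsto_inv_atTop_zero.comp
        (tendsto_atTop_add_const_left _ 1 (tendsto_id (α := ℝ)))).neg
    have hderiv (x : ℝ) (hx : x ∈ Set.Ici 0) :
        HasDerivAt (fun x : ℝ ↦ -(1 + x)⁻¹) ((1 + x) ^ 2)⁻¹ x := by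
      have hx' : (1 : ℝ) + x ≠ 0 := by simp only [Set.mem_Ici] at hx; linarith
      exact (((hasDerivAt_id x).const_add 1).inv hx').neg.congr_deriv
        (by rw [neg_div, neg_neg, one_div, id])
    simpa using integral_Ioi_of_hasDerivAt_of_nonneg' hderiv (fun x _ ↦ by positivity) hlim
  rw [integral_comp_abs (f := fun x ↦ ((1 + x) ^ 2)⁻¹), hIoi]
  norm_num

theorem inv_one_add_abs_div_sq_eq {X : ℝ} (hX : 0 < X) (x : ℝ) :
    ((1 + |x| / X) ^ 2)⁻¹ = ((1 + |x / X|) ^ 2)⁻¹ := by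
  rw [abs_div, abs_of_pos hX]

theorem integrable_inv_one_add_abs_div_sq {X : ℝ} (hX : 0 < X) :
    Integrable fun x : ℝ ↦ ((1 + |x| / X) ^ 2)⁻¹ := by
  simpa only [inv_one_add_abs_div_sq_eq hX] using integrable_inv_one_add_abs_sq.comp_div hX.ne'

theorem integral_inv_one_add_abs_div_sq {X : ℝ} (hX : 0 < X) :
    ∫ x : ℝ, ((1 + |x| / X) ^ 2)⁻¹ = 2 * X := by
  simp only [inv_one_add_abs_div_sq_eq hX]
  rw [Measure.integral_comp_div (fun u : ℝ ↦ ((1 + |u|) ^ 2)⁻¹) X, integral_inv_one_add_abs_sq,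
    abs_of_pos hX, smul_eq_mul, mul_comm]

theorem Real.norm_fourier_le_of_norm_le_mul_inv_one_add_abs_div_sq {E : Type*}
    [NormedAddCommGroup E] [NormedSpace ℂ E] {f : ℝ → E} {A X : ℝ} (hX : 0 < X)
    (hf : ∀ x, ‖f x‖ ≤ A * ((1 + |x| / X) ^ 2)⁻¹) (y : ℝ) : ‖𝓕 f y‖ ≤ A * (2 * X) := by
  simpa only [integral_const_mul, integral_inv_one_add_abs_div_sq hX] using
    norm_fourier_le_integral_of_norm_le ((integrable_inv_one_add_abs_div_sq hX).const_mul A) hf y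

theorem SchwartzMap.integrable_iteratedDeriv {E : Type*} [NormedAddCommGroup E] [NormedSpace ℝ E]
    (f : 𝓢(ℝ, E)) (n : ℕ) : Integrable (iteratedDeriv n f) := by
  refine (integrable_norm_iff ((f.smooth ⊤).continuous_iteratedDeriv n
    (by exact_mod_cast le_top)).aestronglyMeasurable).1 ?_
  simpa [norm_iteratedFDeriv_eq_norm_iteratedDeriv] using
    f.integrable_pow_mul_iteratedFDeriv volume 0 n

theorem SchwartzMap.norm_fourier_iteratedDeriv {E : Type*} [NormedAddCommGroup E]
    [NormedSpace ℂ E] [CompleteSpace E] (f : 𝓢(ℝ, E)) (n : ℕ) (y : ℝ) :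
    ‖𝓕 (iteratedDeriv n f) y‖ = (2 * π * |y|) ^ n * ‖𝓕 (⇑f) y‖ := by
  rw [Real.fourier_iteratedDeriv (f.smooth ⊤) (fun k _ ↦ f.integrable_iteratedDeriv k)
    (by exact_mod_cast le_top), norm_smul, norm_pow]
  simp [abs_of_pos pi_pos, mul_assoc]

theorem one_add_pow_mul_le_of_le_of_pow_mul_le {t F a b : ℝ} {n : ℕ} (ht : 0 ≤ t) (hF : 0 ≤ F)
    (hFa : F ≤ a) (hFb : t ^ n * F ≤ b) : (1 + t) ^ n * F ≤ 2 ^ n * (a + b) := by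
  have hpow : (1 + t) ^ n ≤ 2 ^ n * (1 + t ^ n) :=
    calc (1 + t) ^ n ≤ 2 ^ (n - 1) * (1 ^ n + t ^ n) := add_pow_le zero_le_one ht n
      _ ≤ 2 ^ n * (1 + t ^ n) := by
        rw [one_pow]; gcongr
        · norm_num
        · omega
  calc (1 + t) ^ n * F ≤ 2 ^ n * (1 + t ^ n) * F := by gcongr
    _ = 2 ^ n * (F + t ^ n * F) := by ring
    _ ≤ 2 ^ n * (a + b) := by gcongr

theorem stmt_3_general (C : ℕ → ℝ) (j : ℕ) :
    ∃ D : ℝ, ∀ (X Y : ℝ), 0 < X → 0 < Y → ∀ r : SchwartzMap ℝ ℂ,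
      (∀ k : ℕ, ∀ x : ℝ, ‖iteratedDeriv k (⇑r) x‖ ≤ C k * Y ^ (-(k : ℤ)) * ((1 + |x| / X) ^ 2)⁻¹) →
      ∀ y : ℝ, ‖FourierTransform.fourier (⇑r : ℝ → ℂ) y‖ ≤ D * X * ((1 + |y| * Y) ^ j)⁻¹ := by
  refine ⟨2 ^ j * (2 * C 0 + 2 * C j), fun X Y hX hY r hr y ↦ ?_⟩
  have h0 : ‖𝓕 (⇑r) y‖ ≤ C 0 * (2 * X) := by
    simpa using norm_fourier_le_of_norm_le_mul_inv_one_add_abs_div_sq hX (hr 0) y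
  have hj : (|y| * Y) ^ j * ‖𝓕 (⇑r) y‖ ≤ C j * (2 * X) := by
    have hderiv := norm_fourier_le_of_norm_le_mul_inv_one_add_abs_div_sq hX (hr j) y
    rw [r.norm_fourier_iteratedDeriv] at hderiv
    have hy : |y| ^ j ≤ (2 * π * |y|) ^ j := by
      gcongr
      nlinarith [pi_gt_three, abs_nonneg y]
    calc (|y| * Y) ^ j * ‖𝓕 (⇑r) y‖ = Y ^ j * (|y| ^ j * ‖𝓕 (⇑r) y‖) := by ring
      _ ≤ Y ^ j * (C j * Y ^ (-(j : ℤ)) * (2 * X)) :=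
          mul_le_mul_of_nonneg_left
            ((mul_le_mul_of_nonneg_right hy (norm_nonneg _)).trans hderiv) (by positivity)
      _ = C j * (2 * X) := by
        rw [zpow_neg, zpow_natCast]; field_simp
  rw [← div_eq_mul_inv, le_div_iff₀ (by positivity), mul_comm]
  calc (1 + |y| * Y) ^ j * ‖𝓕 (⇑r) y‖ ≤ 2 ^ j * (C 0 * (2 * X) + C j * (2 * X)) :=
        one_add_pow_mul_le_of_le_of_pow_mul_le (by positivity) (norm_nonneg _) h0 hj
    _ = 2 ^ j * (2 * C 0 + 2 * C j) * X := by ring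

theorem stmt_3 (C : ℕ → ℝ) (hC : ∀ j, 0 ≤ C j) (j : ℕ) :
    ∃ D : ℝ, ∀ (X Y : ℝ), 0 < X → 0 < Y → ∀ r : SchwartzMap ℝ ℂ,
      (∀ k : ℕ, ∀ x : ℝ, ‖iteratedDeriv k (⇑r) x‖ ≤ C k * Y ^ (-(k : ℤ)) * ((1 + |x| / X) ^ 2)⁻¹) →
      ∀ y : ℝ, ‖FourierTransform.fourier (⇑r : ℝ → ℂ) y‖ ≤ D * X * ((1 + |y| * Y) ^ j)⁻¹ :=
  stmt_3_general C j
end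

section
/- Let q_K : ℝ → ℝ be a Schwartz-class function. Then there exists a nonnegative Schwartz-class function q : ℝ → ℝ with q(y) ≥ q_K(y) for all y ∈ ℝ. -/
open Real Polynomial Filter Topology

noncomputable def gauss : ℝ → ℝ := fun x => Real.exp (-x^2)

lemma gauss_contDiff : ContDiff ℝ (⊤ : ℕ∞) gauss :=
  Real.contDiff_exp.comp ((contDiff_id.pow 2).neg)

lemma gauss_nonneg (x : ℝ) : 0 ≤ gauss x := (Real.exp_pos _).le

lemma gauss_le_one (x : ℝ) : gauss x ≤ 1 := by
  rw [show (1:ℝ) = Real.exp 0 by simp]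
  exact Real.exp_le_exp.2 (by nlinarith [sq_nonneg x])

lemma hasDerivAt_gauss (x : ℝ) : HasDerivAt gauss (-(2*x) * Real.exp (-x^2)) x := by
  have h1 : HasDerivAt (fun x : ℝ => -x^2) (-(2*x)) x := by
    simpa using (hasDerivAt_pow 2 x).fun_neg
  unfold gauss
  simpa [Function.comp_def, mul_comm] using (Real.hasDerivAt_exp (-x^2)).comp x h1

lemma gauss_deriv_poly (l : ℕ) :
    ∃ p : Polynomial ℝ, ∀ x, iteratedDeriv l gauss x = p.eval x * Real.exp (-x^2) := by
  induction l with
  | zero => exact ⟨1, by simp [gauss]⟩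
  | succ l ih =>
    obtain ⟨p, hp⟩ := ih
    refine ⟨p.derivative - Polynomial.C 2 * Polynomial.X * p, fun x => ?_⟩
    rw [iteratedDeriv_succ, funext hp]
    have h : HasDerivAt (fun x => p.eval x * Real.exp (-x^2))
        (p.derivative.eval x * Real.exp (-x^2) + p.eval x * (-(2*x) * Real.exp (-x^2))) x :=
      (p.hasDerivAt x).mul (hasDerivAt_gauss x)
    rw [h.deriv]
    simp only [Polynomial.eval_sub, Polynomial.eval_mul, Polynomial.eval_C, Polynomial.eval_X]
    ring

lemma poly_gauss_tendsto_atTop (p : Polynomial ℝ) :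
    Tendsto (fun x : ℝ => |p.eval x| * Real.exp (-x^2)) atTop (𝓝 0) := by
  have h := (p.tendsto_div_exp_atTop).abs
  rw [abs_zero] at h
  refine tendsto_of_tendsto_of_tendsto_of_le_of_le' tendsto_const_nhds h ?_ ?_
  · filter_upwards with x
    positivity
  · filter_upwards [eventually_ge_atTop (1:ℝ)] with x hx
    have h1 : Real.exp (-x^2) ≤ Real.exp (-x) := by
      apply Real.exp_le_exp.2
      nlinarith
    calc |p.eval x| * Real.exp (-x^2) ≤ |p.eval x| * Real.exp (-x) := by
          exact mul_le_mul_of_nonneg_left h1 (abs_nonneg _)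
      _ = |p.eval x / Real.exp x| := by
          rw [abs_div, Real.exp_neg, div_eq_mul_inv, abs_of_pos (Real.exp_pos x)]

lemma poly_gauss_tendsto_cocompact (p : Polynomial ℝ) :
    Tendsto (fun x : ℝ => |p.eval x| * Real.exp (-x^2)) (cocompact ℝ) (𝓝 0) := by
  rw [cocompact_eq_atBot_atTop, tendsto_sup]
  constructor
  · have h := (poly_gauss_tendsto_atTop (p.comp (-Polynomial.X))).comp tendsto_neg_atBot_atTop
    convert h using 2 with x
    simp [Function.comp, Polynomial.eval_comp]
  · exact poly_gauss_tendsto_atTop p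

lemma poly_gauss_bounded (p : Polynomial ℝ) :
    ∃ C, ∀ x : ℝ, |p.eval x| * Real.exp (-x^2) ≤ C := by
  set f : ℝ → ℝ := fun x => |p.eval x| * Real.exp (-x^2) with hf
  have hcont : Continuous f :=
    (p.continuous.abs).mul (Real.continuous_exp.comp (continuous_pow 2).neg)
  have h1 : ∀ᶠ x in cocompact ℝ, f x < 1 :=
    (poly_gauss_tendsto_cocompact p).eventually (eventually_lt_nhds one_pos)
  rw [eventually_iff, mem_cocompact] at h1
  obtain ⟨K, hK, hKsub⟩ := h1
  obtain ⟨C, hC⟩ := hK.exists_bound_of_continuousOn hcont.continuousOn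
  refine ⟨max C 1, fun x => ?_⟩
  by_cases hx : x ∈ K
  · exact le_trans (le_trans (le_abs_self _) (hC x hx)) (le_max_left _ _)
  · exact le_trans (le_of_lt (hKsub hx)) (le_max_right _ _)

lemma gauss_decay (K L : ℕ) :
    ∃ B, 0 ≤ B ∧ ∀ x : ℝ, |x|^K * |iteratedDeriv L gauss x| ≤ B := by
  obtain ⟨p, hp⟩ := gauss_deriv_poly L
  obtain ⟨C, hC⟩ := poly_gauss_bounded (Polynomial.X^K * p)
  refine ⟨max C 0, le_max_right _ _, fun x => ?_⟩
  rw [hp x]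
  calc |x|^K * |p.eval x * Real.exp (-x^2)|
      = |(Polynomial.X^K * p : Polynomial ℝ).eval x| * Real.exp (-x^2) := by
        simp [abs_mul, abs_pow, Real.abs_exp]; ring
    _ ≤ max C 0 := le_trans (hC x) (le_max_left _ _)

lemma iteratedDeriv_const_mul' {n : ℕ} {f : ℝ → ℝ} (h : ContDiff ℝ n f) (c : ℝ) (x : ℝ) :
    iteratedDeriv n (fun y => c * f y) x = c * iteratedDeriv n f x := by
  simp only [← iteratedDerivWithin_univ]
  exact iteratedDerivWithin_const_mul (Set.mem_univ x) uniqueDiffOn_univ c h.contDiffAt.contDiffWithinAt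

lemma scaled_gauss_deriv (L : ℕ) (a c : ℝ) (x : ℝ) :
    iteratedDeriv L (fun y => a * gauss (c * y)) x
      = a * (c ^ L * iteratedDeriv L gauss (c * x)) := by
  have h : ContDiff ℝ L gauss := gauss_contDiff.of_le (mod_cast le_top)
  have h2 : ContDiff ℝ L (fun y : ℝ => gauss (c * y)) :=
    h.comp (contDiff_const.mul contDiff_id)
  rw [iteratedDeriv_const_mul' (f := fun y => gauss (c * y)) h2 a x]
  rw [iteratedDeriv_comp_const_mul h c]

noncomputable def Bc (K L : ℕ) : ℝ := (gauss_decay K L).choose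

lemma Bc_nonneg (K L : ℕ) : 0 ≤ Bc K L := (gauss_decay K L).choose_spec.1

lemma Bc_spec (K L : ℕ) (x : ℝ) : |x|^K * |iteratedDeriv L gauss x| ≤ Bc K L :=
  (gauss_decay K L).choose_spec.2 x

theorem stmt_5 (qK : SchwartzMap ℝ ℝ) :
    ∃ q : SchwartzMap ℝ ℝ, (∀ y, 0 ≤ q y) ∧ ∀ y, qK y ≤ q y := by
  classical
  set A : ℕ → Set ℝ := fun n => (fun y : ℝ => |y|) ⁻¹' Set.Icc (n : ℝ) (n+1) with hA
  have hAcomp : ∀ n, IsCompact (A n) := by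
    intro n
    apply Metric.isCompact_of_isClosed_isBounded
    · exact isClosed_Icc.preimage continuous_abs
    · apply (Metric.isBounded_Icc (-(n+1) : ℝ) (n+1)).subset
      intro y hy
      obtain ⟨h1, h2⟩ := hy
      exact ⟨by linarith [neg_abs_le y], by linarith [le_abs_self y]⟩
  have hmemA : ∀ n : ℕ, (n : ℝ) ∈ A n := by
    intro n
    have habs : |(n:ℝ)| = (n:ℝ) := abs_of_nonneg (by positivity)
    simp only [hA, Set.mem_preimage, Set.mem_Icc, habs]
    exact ⟨le_refl _, by linarith⟩
  set M : ℕ → ℝ := fun n => sSup ((fun y => |qK y|) '' A n) with hM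
  have hbdd : ∀ n, BddAbove ((fun y => |qK y|) '' A n) := by
    intro n
    exact ((hAcomp n).image (qK.continuous.abs)).bddAbove
  have hM_ge : ∀ n, ∀ y ∈ A n, |qK y| ≤ M n := by
    intro n y hy
    exact le_csSup (hbdd n) (Set.mem_image_of_mem _ hy)
  have hM0 : ∀ n, 0 ≤ M n := fun n =>
    le_trans (abs_nonneg _) (hM_ge n n (hmemA n))
  -- superpolynomial decay of M
  have hMle : ∀ (k n : ℕ), M n * ((n:ℝ)+1)^k ≤
      2^k * (Finset.Iic (k,0)).sup (fun m => SchwartzMap.seminorm ℝ m.1 m.2) qK := by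
    intro k n
    set D := (2:ℝ)^k * (Finset.Iic (k,0)).sup (fun m => SchwartzMap.seminorm ℝ m.1 m.2) qK with hD
    have h1 : M n ≤ D / ((n:ℝ)+1)^k := by
      apply csSup_le (Set.Nonempty.image _ ⟨_, hmemA n⟩)
      rintro b ⟨y, hy, rfl⟩
      rw [le_div_iff₀ (by positivity)]
      have h2 : ((n:ℝ)+1)^k ≤ (1 + |y|)^k := by
        apply pow_le_pow_left₀ (by positivity)
        have := hy.1
        linarith
      calc |qK y| * ((n:ℝ)+1)^k ≤ (1 + |y|)^k * |qK y| := by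
            rw [mul_comm]
            exact mul_le_mul_of_nonneg_right h2 (abs_nonneg _)
        _ ≤ D := by
            have h3 := SchwartzMap.one_add_le_sup_seminorm_apply (𝕜 := ℝ) (m := (k, 0))
              le_rfl le_rfl qK y
            simpa [norm_iteratedFDeriv_zero, Real.norm_eq_abs] using h3
    calc M n * ((n:ℝ)+1)^k ≤ (D / ((n:ℝ)+1)^k) * ((n:ℝ)+1)^k :=
          mul_le_mul_of_nonneg_right h1 (by positivity)
      _ = D := div_mul_cancel₀ _ (by positivity)
  -- summability
  have hMsum : ∀ k : ℕ, Summable (fun n => M n * ((n:ℝ)+1)^k) := by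
    intro k
    set D := (2:ℝ)^(k+2) *
      (Finset.Iic (k+2,0)).sup (fun m => SchwartzMap.seminorm ℝ m.1 m.2) qK with hD
    have hsum2 : Summable (fun n : ℕ => D * (1 / ((n:ℝ)+1)^2)) := by
      apply Summable.mul_left
      have := (summable_nat_add_iff 1).mpr (Real.summable_one_div_nat_pow.mpr one_lt_two)
      refine this.congr fun n => ?_
      push_cast
      ring
    apply Summable.of_nonneg_of_le
      (fun n => mul_nonneg (hM0 n) (by positivity)) (fun n => ?_) hsum2
    have h3 : (0:ℝ) < ((n:ℝ)+1)^2 := by positivity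
    rw [mul_one_div, le_div_iff₀ h3]
    calc M n * ((n:ℝ)+1)^k * ((n:ℝ)+1)^2 = M n * ((n:ℝ)+1)^(k+2) := by ring
      _ ≤ D := hMle (k+2) n
  set a : ℕ → ℝ := fun n => Real.exp 1 * M n with ha
  have ha0 : ∀ n, 0 ≤ a n := fun n => mul_nonneg (Real.exp_pos 1).le (hM0 n)
  have hasum : ∀ k : ℕ, Summable (fun n => a n * ((n:ℝ)+1)^k) := by
    intro k
    simpa [ha, mul_assoc] using (hMsum k).mul_left (Real.exp 1)
  have hasum0 : Summable a := by
    simpa using hasum 0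
  set c : ℕ → ℝ := fun n => (((n:ℝ)+1))⁻¹ with hc
  have hc_pos : ∀ n, 0 < c n := fun n => by positivity
  have hc_le : ∀ n, c n ≤ 1 := fun n => by
    simp only [hc]
    exact inv_le_one_of_one_le₀ (le_add_of_nonneg_left (by positivity))
  set T : ℕ → ℝ → ℝ := fun n y => a n * gauss (c n * y) with hT
  have hTcd : ∀ n, ContDiff ℝ (⊤ : ℕ∞) (T n) :=
    fun n => contDiff_const.mul (gauss_contDiff.comp (contDiff_const.mul contDiff_id))
  -- the key uniform bound
  have hTb : ∀ (K L : ℕ) (n : ℕ) (x : ℝ),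
      |x|^K * ‖iteratedFDeriv ℝ L (T n) x‖ ≤ a n * ((n:ℝ)+1)^K * Bc K L := by
    intro K L n x
    rw [norm_iteratedFDeriv_eq_norm_iteratedDeriv, Real.norm_eq_abs]
    simp only [hT]
    rw [scaled_gauss_deriv L (a n) (c n) x]
    have e1 : |a n * ((c n)^L * iteratedDeriv L gauss (c n * x))|
        = a n * ((c n)^L * |iteratedDeriv L gauss (c n * x)|) := by
      rw [abs_mul (a n) ((c n)^L * iteratedDeriv L gauss (c n * x)),
        abs_mul ((c n)^L) (iteratedDeriv L gauss (c n * x)),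
        abs_of_nonneg (ha0 n), abs_pow, abs_of_pos (hc_pos n)]
    have hxeq : |x|^K = ((n:ℝ)+1)^K * |c n * x|^K := by
      rw [← mul_pow]
      congr 1
      rw [abs_mul, abs_of_pos (hc_pos n)]
      simp only [hc]
      field_simp
    rw [e1, hxeq]
    have h1 : (c n)^L ≤ 1 := pow_le_one₀ (hc_pos n).le (hc_le n)
    have h2 : |c n * x|^K * |iteratedDeriv L gauss (c n * x)| ≤ Bc K L := Bc_spec K L _
    calc ((n:ℝ)+1)^K * |c n * x|^K * (a n * ((c n)^L * |iteratedDeriv L gauss (c n * x)|))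
        = a n * ((n:ℝ)+1)^K * ((c n)^L * (|c n * x|^K * |iteratedDeriv L gauss (c n * x)|)) := by
          ring
      _ ≤ a n * ((n:ℝ)+1)^K * (1 * Bc K L) := by
          apply mul_le_mul_of_nonneg_left _ (mul_nonneg (ha0 n) (by positivity))
          apply mul_le_mul h1 h2 (by positivity) zero_le_one
      _ = a n * ((n:ℝ)+1)^K * Bc K L := by ring
  have hTb0 : ∀ (L : ℕ) (n : ℕ) (x : ℝ),
      ‖iteratedFDeriv ℝ L (T n) x‖ ≤ a n * Bc 0 L := by
    intro L n x
    have := hTb 0 L n x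
    simpa using this
  have hv : ∀ k : ℕ, (k : ℕ∞) ≤ ⊤ → Summable (fun n => a n * Bc 0 k) :=
    fun k _ => hasum0.mul_right _
  have h'f : ∀ (k : ℕ) (n : ℕ) (x : ℝ), (k : ℕ∞) ≤ ⊤ →
      ‖iteratedFDeriv ℝ k (T n) x‖ ≤ a n * Bc 0 k := fun k n x _ => hTb0 k n x
  have hsmooth := contDiff_tsum (𝕜 := ℝ) (N := (⊤ : ℕ∞))
    (fun n => (hTcd n).of_le (mod_cast le_top)) hv h'f
  have hderiv : ∀ (L : ℕ) (x : ℝ), iteratedFDeriv ℝ L (fun y => ∑' n, T n y) x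
      = ∑' n, iteratedFDeriv ℝ L (T n) x :=
    fun L x => iteratedFDeriv_tsum_apply (fun n => (hTcd n).of_le (mod_cast le_top)) hv h'f (mod_cast le_top) x
  have hdecay : ∀ (K L : ℕ), ∃ C : ℝ, ∀ x : ℝ,
      ‖x‖^K * ‖iteratedFDeriv ℝ L (fun y => ∑' n, T n y) x‖ ≤ C := by
    intro K L
    refine ⟨(∑' n, a n * ((n:ℝ)+1)^K) * Bc K L, fun x => ?_⟩
    rw [hderiv L x, Real.norm_eq_abs]
    have hsumnorm : Summable (fun n => ‖iteratedFDeriv ℝ L (T n) x‖) :=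
      Summable.of_nonneg_of_le (fun n => norm_nonneg _) (fun n => hTb0 L n x)
        (hasum0.mul_right _)
    calc |x|^K * ‖∑' n, iteratedFDeriv ℝ L (T n) x‖
        ≤ |x|^K * ∑' n, ‖iteratedFDeriv ℝ L (T n) x‖ := by
          exact mul_le_mul_of_nonneg_left (norm_tsum_le_tsum_norm hsumnorm) (by positivity)
      _ = ∑' n, |x|^K * ‖iteratedFDeriv ℝ L (T n) x‖ := tsum_mul_left.symm
      _ ≤ ∑' n, a n * ((n:ℝ)+1)^K * Bc K L := by
          apply Summable.tsum_le_tsum (fun n => hTb K L n x)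
          · exact Summable.of_nonneg_of_le (fun n => by positivity)
              (fun n => hTb K L n x) ((hasum K).mul_right _)
          · exact (hasum K).mul_right _
      _ = (∑' n, a n * ((n:ℝ)+1)^K) * Bc K L := tsum_mul_right
  refine ⟨⟨fun y => ∑' n, T n y, hsmooth, fun k L => ?_⟩, ?_, ?_⟩
  · exact hdecay k L
  · intro y
    show (0:ℝ) ≤ ∑' n, T n y
    exact tsum_nonneg (fun n => mul_nonneg (ha0 n) (gauss_nonneg _))
  · intro y
    show qK y ≤ ∑' n, T n y
    set n := ⌊|y|⌋₊ with hn
    have hy1 : (n:ℝ) ≤ |y| := Nat.floor_le (abs_nonneg y)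
    have hy2 : |y| ≤ (n:ℝ) + 1 := (Nat.lt_floor_add_one |y|).le
    have hyA : y ∈ A n := ⟨hy1, hy2⟩
    have hsummy : Summable (fun m => T m y) := by
      apply Summable.of_nonneg_of_le (fun m => mul_nonneg (ha0 m) (gauss_nonneg _))
        (fun m => ?_) hasum0
      calc T m y ≤ a m * 1 := mul_le_mul_of_nonneg_left (gauss_le_one _) (ha0 m)
        _ = a m := mul_one _
    have hle : T n y ≤ ∑' m, T m y :=
      Summable.le_tsum hsummy n (fun m _ => mul_nonneg (ha0 m) (gauss_nonneg _))
    refine le_trans ?_ hle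
    have h1 : |c n * y| ≤ 1 := by
      rw [abs_mul, abs_of_pos (hc_pos n)]
      rw [hc]
      rw [inv_mul_le_iff₀ (by positivity)]
      simpa using hy2
    have h2 : Real.exp (-1:ℝ) ≤ gauss (c n * y) := by
      simp only [gauss]
      apply Real.exp_le_exp.2
      have h3 : (c n * y)^2 ≤ 1 := (sq_le_one_iff_abs_le_one _).mpr h1
      linarith
    have h4 : M n ≤ T n y := by
      simp only [hT, ha]
      calc M n = (Real.exp 1 * Real.exp (-1:ℝ)) * M n := by
            rw [← Real.exp_add]; simp
        _ = Real.exp 1 * M n * Real.exp (-1:ℝ) := by ring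
        _ ≤ Real.exp 1 * M n * gauss (c n * y) :=
            mul_le_mul_of_nonneg_left h2 (mul_nonneg (Real.exp_pos 1).le (hM0 n))
    exact le_trans (le_trans (le_abs_self _) (hM_ge n y hyA)) h4
end

section
/- Let b ≥ 1 and r ≥ 1 be integers such that every prime dividing r also divides b. Then for any finite sequence of complex numbers (c_m), Σ_{x mod b} |Σ_m c_m S(r x, m; b r)|² = b r² Σ*_{y mod b} |Σ_{m ≡ 0 mod r} c_m e(y (m/r) / b)|², where S(a, m; c) = Σ*_{h mod c} e((a h + m h̄)/c) is the Kloosterman sum, e(x) = e^{2πi x}, Σ* denotes summation over residues coprime to the modulus, and h̄ is the inverse of h mod c. -/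
/-- `e(x) = exp(2πix)`. -/
noncomputable def eBase (x : ℝ) : ℂ := Complex.exp (2 * Real.pi * Complex.I * x)

/-- The Kloosterman sum `S(a,b;c) = Σ*_{h mod c} e((a h + b h̄)/c)`. -/
noncomputable def kloosterman (a b : ℤ) (c : ℕ) : ℂ :=
  if h : c = 0 then 0 else
    haveI : NeZero c := ⟨h⟩
    ∑ u : (ZMod c)ˣ,
      eBase (((a * (((u : ZMod c)).val : ℤ) + b * ((((u⁻¹ : (ZMod c)ˣ) : ZMod c)).val : ℤ) : ℤ) : ℝ) / c)

/-!
Since `e(r x u / b r)` only depends on `u mod b`, grouping the units `u mod b r` by their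
reduction `z mod b` turns `Σ_m c_m S(r x, m; b r)` into `Σ_z e(x z / b) B(z)`, and Parseval
over `x mod b` gives `b Σ_z |B(z)|²`. As every prime factor of `r` divides `b`, the units of
`ℤ/brℤ` above a unit `z mod b` are all of its lifts `z + b t`, `t mod r`; summing `e(m g / b r)`
over them gives `r e((m/r) z / b)` if `r ∣ m` and `0` otherwise, so
`B(z) = r Σ_{r ∣ m} c_m e((m/r) z⁻¹ / b)`.
-/

open Finset ZMod

lemma eBase_intCast_div (n : ℕ) [NeZero n] (k : ℤ) :
    eBase ((k : ℝ) / n) = stdAddChar (k : ZMod n) := by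
  rw [stdAddChar_coe, eBase]
  congr 1
  push_cast
  ring

lemma kloosterman_eq_sum_stdAddChar (a m : ℤ) (n : ℕ) [NeZero n] :
    kloosterman a m n = ∑ u : (ZMod n)ˣ, stdAddChar (N := n) (a * u + m * ↑u⁻¹) := by
  rw [kloosterman, dif_neg (NeZero.ne n)]
  refine sum_congr rfl fun u _ => ?_
  rw [eBase_intCast_div]
  push_cast
  simp only [natCast_val, cast_id', id]

lemma stdAddChar_natCast_mul {N d n : ℕ} [NeZero N] [NeZero n] (hN : N = d * n) (k : ZMod N) :
    stdAddChar ((d : ZMod N) * k) = stdAddChar (k.cast : ZMod n) := by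
  subst hN
  have hd : (d : ℂ) ≠ 0 := by exact_mod_cast left_ne_zero_of_mul (NeZero.ne (d * n))
  conv_lhs => rw [← natCast_zmod_val k]
  rw [cast_eq_val, ← Int.cast_natCast (R := ZMod n), ← Nat.cast_mul, ← Int.cast_natCast,
    stdAddChar_coe, stdAddChar_coe]
  congr 1
  push_cast
  field_simp

lemma sum_range_eq_sum_zmod {M : Type*} [AddCommMonoid M] (n : ℕ) [NeZero n] (f : ZMod n → M) :
    ∑ x ∈ range n, f x = ∑ x : ZMod n, f x :=
  sum_nbij' (↑) val (fun _ _ => mem_univ _) (fun x _ => mem_range.2 (val_lt x))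
    (fun _ hx => val_cast_of_lt (mem_range.1 hx)) (fun u _ => natCast_zmod_val u) (fun _ _ => rfl)

lemma sum_units_eq_sum_filter_coprime {M : Type*} [AddCommMonoid M] (n : ℕ) [NeZero n]
    (f : ZMod n → M) :
    ∑ u : (ZMod n)ˣ, f u = ∑ y ∈ (range n).filter (fun y => y.Coprime n), f y :=
  sum_nbij' (fun u => (u : ZMod n).val)
    (fun y => if h : y.Coprime n then unitOfCoprime y h else 1)
    (fun u _ => mem_filter.2 ⟨mem_range.2 (val_lt _), val_coe_unit_coprime u⟩)
    (fun _ _ => mem_univ _)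
    (fun u _ => by simp [dif_pos (val_coe_unit_coprime u), Units.ext_iff])
    (fun y hy => by
      obtain ⟨hy, hcop⟩ := mem_filter.1 hy
      simp [dif_pos hcop, val_cast_of_lt (mem_range.1 hy)])
    (fun u _ => by simp)

lemma sum_norm_sq_sum_stdAddChar_mul {N : ℕ} [NeZero N] {ι : Type*} [Fintype ι]
    {v : ι → ZMod N} (hv : Function.Injective v) (F : ι → ℂ) :
    ∑ x : ZMod N, ‖∑ i, stdAddChar (x * v i) * F i‖ ^ 2 = N * ∑ i, ‖F i‖ ^ 2 := by
  classical
  have horth : ∀ i j, ∑ x : ZMod N, stdAddChar (x * v i) * stdAddChar (-(x * v j)) =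
      if i = j then (N : ℂ) else 0 := by
    intro i j
    simp_rw [← AddChar.map_add_eq_mul, ← mul_neg, ← mul_add,
      AddChar.sum_mulShift _ (isPrimitive_stdAddChar N), ← sub_eq_add_neg, sub_eq_zero,
      hv.eq_iff, ZMod.card, Nat.cast_ite, Nat.cast_zero]
  apply Complex.ofReal_injective
  push_cast
  simp_rw [← Complex.mul_conj', map_sum, map_mul, ← AddChar.map_neg_eq_conj, sum_mul_sum,
    mul_sum]
  rw [sum_comm]
  refine sum_congr rfl fun i _ => ?_
  rw [sum_comm]
  simp_rw [mul_mul_mul_comm _ (F i), mul_comm _ (F i * _), ← mul_sum, horth]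
  simp [mul_comm]

lemma Nat.Coprime.mul_right_of_prime_dvd {x b r : ℕ} (hx : x.Coprime b)
    (hrad : ∀ p : ℕ, p.Prime → p ∣ r → p ∣ b) : x.Coprime (b * r) :=
  hx.mul_right <| Nat.coprime_of_dvd fun p hp hpx hpr =>
    hp.ne_one <| Nat.eq_one_of_dvd_coprimes hx hpx (hrad p hp hpr)

section Fibers


variable {b r : ℕ} [NeZero b] [NeZero r]

lemma isUnit_of_isUnit_cast (hrad : ∀ p : ℕ, p.Prime → p ∣ r → p ∣ b) {g : ZMod (b * r)}
    (hg : IsUnit (g.cast : ZMod b)) : IsUnit g := by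
  rw [cast_eq_val, isUnit_iff_coprime] at hg
  rw [← natCast_zmod_val g, isUnit_iff_coprime]
  exact hg.mul_right_of_prime_dvd hrad

lemma sum_fiber_cast_eq_sum_range {M : Type*} [AddCommMonoid M] (f : ZMod (b * r) → M)
    (w : ZMod b) :
    ∑ g with (g.cast : ZMod b) = w, f g =
      ∑ t ∈ range r, f ((w.val + b * t : ℕ) : ZMod (b * r)) := by
  have hb : 0 < b := Nat.pos_of_neZero b
  have hlift : ∀ g : ZMod (b * r), (g.cast : ZMod b) = w → w.val + b * (g.val / b) = g.val := by
    intro g hg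
    rw [← hg, cast_eq_val, val_natCast, Nat.mod_add_div]
  refine sum_nbij' (fun g => g.val / b) (fun t => ((w.val + b * t : ℕ) : ZMod (b * r)))
    ?_ ?_ ?_ ?_ ?_
  · exact fun g _ => mem_range.2 (Nat.div_lt_of_lt_mul (val_lt g))
  · intro t _
    rw [mem_filter, cast_natCast (dvd_mul_right b r)]
    refine ⟨mem_univ _, ?_⟩
    push_cast
    rw [natCast_self, zero_mul, add_zero, natCast_zmod_val]
  · intro g hg
    rw [hlift g (mem_filter.1 hg).2, natCast_zmod_val]
  · intro t ht
    have hlt : w.val + b * t < b * r := by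
      have := val_lt w
      nlinarith [mem_range.1 ht]
    simp only [val_natCast_of_lt hlt, Nat.add_mul_div_left _ _ hb, Nat.div_eq_of_lt (val_lt w),
      zero_add]
  · intro g hg
    rw [hlift g (mem_filter.1 hg).2, natCast_zmod_val]

lemma sum_units_fiber_eq_sum_fiber {M : Type*} [AddCommMonoid M]
    (hrad : ∀ p : ℕ, p.Prime → p ∣ r → p ∣ b) (f : ZMod (b * r) → M)
    (z : (ZMod b)ˣ) :
    ∑ u with unitsMap (dvd_mul_right b r) u = z, f u = ∑ g with (g.cast : ZMod b) = z, f g := by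
  refine sum_nbij (↑) ?_ Units.val_injective.injOn ?_ fun _ _ => rfl
  · intro u hu
    simp only [mem_filter, ← (mem_filter.1 hu).2, unitsMap_val, mem_univ, true_and]
  · intro g hg
    have hg' := (mem_filter.1 hg).2
    have hunit := isUnit_of_isUnit_cast hrad (hg' ▸ z.isUnit)
    refine ⟨hunit.unit, mem_filter.2 ⟨mem_univ _, Units.ext ?_⟩, rfl⟩
    rw [unitsMap_val, IsUnit.unit_spec, hg']

lemma sum_units_fiber_stdAddChar (hrad : ∀ p : ℕ, p.Prime → p ∣ r → p ∣ b) (m : ℕ)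
    (z : (ZMod b)ˣ) :
    ∑ u with unitsMap (dvd_mul_right b r) u = z, stdAddChar (N := b * r) (m * u) =
      if r ∣ m then r * stdAddChar (N := b) ((m / r : ℕ) * z) else 0 := by
  rw [sum_units_fiber_eq_sum_fiber hrad (fun g => stdAddChar (N := b * r) (m * g)),
    sum_fiber_cast_eq_sum_range]
  have hterm : ∀ t : ℕ, stdAddChar (N := b * r) (m * ((z : ZMod b).val + b * t : ℕ)) =
      stdAddChar (N := b * r) (m * (z : ZMod b).val) * stdAddChar (N := r) (t * m) := by
    intro t
    rw [show (t * m : ZMod r) = (((t * m : ℕ) : ZMod (b * r)).cast : ZMod r) by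
        rw [cast_natCast (dvd_mul_left r b), Nat.cast_mul],
      ← stdAddChar_natCast_mul rfl, ← AddChar.map_add_eq_mul]
    congr 1
    push_cast
    ring
  simp_rw [hterm, ← mul_sum, sum_range_eq_sum_zmod r (fun t => stdAddChar (t * (m : ZMod r))),
    AddChar.sum_mulShift _ (isPrimitive_stdAddChar r), natCast_eq_zero_iff, ZMod.card]
  split_ifs with hrm
  · obtain ⟨k, rfl⟩ := hrm
    rw [Nat.mul_div_cancel_left k (Nat.pos_of_neZero r), mul_comm,
      show ((r * k : ℕ) : ZMod (b * r)) * ((z : ZMod b).val : ZMod (b * r)) =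
        r * ((k * (z : ZMod b).val : ℕ) : ZMod (b * r)) by push_cast; ring,
      stdAddChar_natCast_mul (mul_comm b r), cast_natCast (dvd_mul_right b r), Nat.cast_mul,
      natCast_zmod_val]
  · rw [Nat.cast_zero, mul_zero]

lemma sum_mul_kloosterman_eq_sum_units (s : Finset ℕ) (c : ℕ → ℂ) (x : ℤ) :
    ∑ m ∈ s, c m * kloosterman (r * x) m (b * r) =
      ∑ z : (ZMod b)ˣ, stdAddChar (N := b) (x * z) *
        ∑ u with unitsMap (dvd_mul_right b r) u = z,
          ∑ m ∈ s, c m * stdAddChar (N := b * r) (m * ↑u⁻¹) := by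
  have hsplit : ∀ m : ℕ, ∀ u : (ZMod (b * r))ˣ,
      stdAddChar (N := b * r) ((r * x : ℤ) * u + (m : ℤ) * ↑u⁻¹) =
        stdAddChar (N := b) (x * unitsMap (dvd_mul_right b r) u) *
          stdAddChar (N := b * r) (m * ↑u⁻¹) := by
    intro m u
    rw [AddChar.map_add_eq_mul, Int.cast_mul, Int.cast_natCast, mul_assoc,
      stdAddChar_natCast_mul (mul_comm b r), cast_mul (dvd_mul_right b r),
      cast_intCast (dvd_mul_right b r), unitsMap_val, Int.cast_natCast]
  simp_rw [kloosterman_eq_sum_stdAddChar, hsplit, mul_sum]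
  rw [sum_comm, ← sum_fiberwise univ (unitsMap (dvd_mul_right b r))]
  refine sum_congr rfl fun z _ => sum_congr rfl fun u hu => ?_
  rw [(mem_filter.1 hu).2]
  exact sum_congr rfl fun m _ => by ring

lemma sum_units_fiber_sum_stdAddChar_inv (hrad : ∀ p : ℕ, p.Prime → p ∣ r → p ∣ b)
    (s : Finset ℕ) (c : ℕ → ℂ) (z : (ZMod b)ˣ) :
    ∑ u with unitsMap (dvd_mul_right b r) u = z,
        ∑ m ∈ s, c m * stdAddChar (N := b * r) (m * ↑u⁻¹) =
      r * ∑ m ∈ s with r ∣ m, c m * stdAddChar (N := b) ((m / r : ℕ) * ↑z⁻¹) := by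
  rw [sum_comm, mul_sum, sum_filter]
  refine sum_congr rfl fun m _ => ?_
  have hinv :
      ∑ u with unitsMap (dvd_mul_right b r) u = z, stdAddChar (N := b * r) (m * ↑u⁻¹) =
      ∑ g with unitsMap (dvd_mul_right b r) g = z⁻¹, stdAddChar (N := b * r) (m * g) :=
    sum_equiv (Equiv.inv _) (by simp) fun _ _ => rfl
  rw [← mul_sum, hinv, sum_units_fiber_stdAddChar hrad]
  split_ifs <;> ring

end Fibers

theorem stmt_8 (b r M : ℕ) (hb : 1 ≤ b) (hr : 1 ≤ r)
    (hrad : ∀ p : ℕ, p.Prime → p ∣ r → p ∣ b) (c : ℕ → ℂ) :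
    ∑ x ∈ Finset.range b, ‖∑ m ∈ Finset.Icc 1 M, c m * kloosterman (r * x) m (b * r)‖ ^ 2
      = (b : ℝ) * r ^ 2 *
        ∑ y ∈ (Finset.range b).filter (fun y => Nat.Coprime y b),
          ‖∑ m ∈ (Finset.Icc 1 M).filter (fun m => r ∣ m),
              c m * eBase (((y * (m / r) : ℕ) : ℝ) / (b : ℝ))‖ ^ 2 := by
  have : NeZero b := ⟨by omega⟩
  have : NeZero r := ⟨by omega⟩
  set G : ZMod b → ℂ := fun y =>
    ∑ m ∈ Icc 1 M with r ∣ m, c m * stdAddChar (N := b) ((m / r : ℕ) * y)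
  calc ∑ x ∈ range b, ‖∑ m ∈ Icc 1 M, c m * kloosterman (r * x) m (b * r)‖ ^ 2
      =
        ∑ x : ZMod b, ‖∑ z : (ZMod b)ˣ, stdAddChar (N := b) (x * z) * (r * G ↑z⁻¹)‖ ^ 2 := by
        simp_rw [sum_mul_kloosterman_eq_sum_units, sum_units_fiber_sum_stdAddChar_inv hrad,
          Int.cast_natCast]
        exact sum_range_eq_sum_zmod b fun x : ZMod b =>
          ‖∑ z : (ZMod b)ˣ, stdAddChar (N := b) (x * z) * (r * G ↑z⁻¹)‖ ^ 2
    _ = b * ∑ z : (ZMod b)ˣ, ‖(r : ℂ) * G ↑z⁻¹‖ ^ 2 :=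
        sum_norm_sq_sum_stdAddChar_mul Units.val_injective _
    _ = b * r ^ 2 * ∑ z : (ZMod b)ˣ, ‖G z‖ ^ 2 := by
        simp_rw [norm_mul, mul_pow, ← mul_sum, Complex.norm_natCast, mul_assoc]
        congr 2
        exact Fintype.sum_equiv (Equiv.inv _) _ _ fun _ => rfl
    _ = _ := by
        rw [sum_units_eq_sum_filter_coprime b fun y => ‖G y‖ ^ 2]
        refine congrArg _ (sum_congr rfl fun y _ => ?_)
        refine congrArg (‖·‖ ^ 2) (sum_congr rfl fun m _ => ?_)
        rw [← Int.cast_natCast (R := ℝ), eBase_intCast_div, Int.cast_natCast, Nat.cast_mul,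
          mul_comm (y : ZMod b)]
end
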